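/- arXiv:1109.1806 — 2 statements merged into one kernel-verified Lean document; each statement's English description precedes it below -/
import Mathlib

section
/- Let S = {(a,0) : a ≥ 1} ∪ {(0,a) : a ≥ 1} ∪ {(a,a) : a ≥ 1} be the set of queen steps. Work in the ring ℚ[ρ,ω] of polynomials in two variables, and for n ≥ 0 let p^w_n = Σ_π ρ^{r(π)} ω^{b(π)}, where the sum is over all Catalan S-paths π from (0,0) to (n,n), r(π) is the number of rook steps of π (steps of the form (a,0) or (0,a)) and b(π) is the number of bishop steps of π (steps of the form (a,a)). Let P^w(t) = Σ_{n≥0} p^w_n tⁿ ∈ (ℚ[ρ,ω])⟦t⟧. Then P^w satisfies the quadratic equation t·(ρ + 1 − (ρ + ω + 1)t)²·(P^w)² − (1−t)·(1 − (ω − 2ρ)t − (ω + 2ρ + 1)t²)·P^w + (1−t)² = 0 in (ℚ[ρ,ω])⟦t⟧. -/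
/-- x-coordinate of the `j`-th node of the path `p` (partial sum of first coordinates). -/
def xPart (p : List (ℕ × ℕ)) (j : ℕ) : ℕ := ((p.take j).map Prod.fst).sum

/-- y-coordinate of the `j`-th node of the path `p` (partial sum of second coordinates). -/
def yPart (p : List (ℕ × ℕ)) (j : ℕ) : ℕ := ((p.take j).map Prod.snd).sum

/-- `p` is an `S`-path from `(0,0)` to `(n,m)`. -/
def IsPath (S : Set (ℕ × ℕ)) (n m : ℕ) (p : List (ℕ × ℕ)) : Prop :=
  (∀ st ∈ p, st ∈ S) ∧ xPart p p.length = n ∧ yPart p p.length = m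

/-- `p` is Catalan: every node `(x, y)` satisfies `x ≤ y`. -/
def IsCatalan (p : List (ℕ × ℕ)) : Prop :=
  ∀ j ≤ p.length, xPart p j ≤ yPart p j

/-- The number of `S`-paths from `(0,0)` to `(n,m)`. -/
noncomputable def aCount (S : Set (ℕ × ℕ)) (n m : ℕ) : ℕ :=
  Set.ncard {p : List (ℕ × ℕ) | IsPath S n m p}

/-- The number of Catalan `S`-paths from `(0,0)` to `(n,n)`. -/
noncomputable def pCatalan (S : Set (ℕ × ℕ)) (n : ℕ) : ℕ :=
  Set.ncard {p : List (ℕ × ℕ) | IsPath S n n p ∧ IsCatalan p}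

/-- The set of queen steps: proper horizontal, vertical and diagonal steps. -/
def queenSteps : Set (ℕ × ℕ) :=
  {st | (∃ a : ℕ, 1 ≤ a ∧ st = (a, 0)) ∨ (∃ a : ℕ, 1 ≤ a ∧ st = (0, a)) ∨
        (∃ a : ℕ, 1 ≤ a ∧ st = (a, a))}

/-- Enumerator of Catalan queen paths to `(n,n)` by numbers of rook and bishop
steps: `Σ_π ρ^{r(π)} ω^{b(π)}` in `ℚ[ρ,ω]`, where `ρ = X 0`, `ω = X 1`. -/
noncomputable def pQueenW (n : ℕ) : MvPolynomial (Fin 2) ℚ :=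
  ∑ᶠ p ∈ {p : List (ℕ × ℕ) | IsPath queenSteps n n p ∧ IsCatalan p},
    (MvPolynomial.X 0 : MvPolynomial (Fin 2) ℚ) ^
        (p.countP fun st => st.1 == 0 || st.2 == 0) *
    (MvPolynomial.X 1 : MvPolynomial (Fin 2) ℚ) ^
        (p.countP fun st => st.1 == st.2)

/-- The variable `ρ` (weight of a rook step), as a constant power series. -/
noncomputable def ρq : PowerSeries (MvPolynomial (Fin 2) ℚ) :=
  PowerSeries.C (MvPolynomial.X 0)

/-- The variable `ω` (weight of a bishop step), as a constant power series. -/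
noncomputable def ωq : PowerSeries (MvPolynomial (Fin 2) ℚ) :=
  PowerSeries.C (MvPolynomial.X 1)

/-!
Let `d(x, u)` be the weight of the Catalan queen paths ending at `(x, x + u)`. The last step of
such a path starts at `(i, x + u)` with `i < x` (rook), at `(x, x + b)` with `b < u` (rook) or at
`(k, k + u)` with `k < x` (bishop). For `D_u(t) = Σ_x d(x, u) tˣ` and a catalytic variable `z`
marking the height `u`, the series `F(z) = Σ_u zᵘ D_u` therefore satisfies a linear equation
involving `F(z)` and `T = F(t)`, the series of all Catalan paths counted by their last
`y`-coordinate. Substituting `z = g t` for a power series `g` and clearing denominators gives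
`K(g) F(g t) = (1 - t) (1 - g t) (1 - g + ρ T)`. At `g = 1 + ρ T` the right side vanishes and
`F(g t)` is invertible, so `K(1 + ρ T) = 0`; at `g = 0` it reads `K(0) P = (1 - t) (1 + ρ T)`
with `P = D_0`. Eliminating `T` between these two equations gives the quadratic equation.
The substitution is carried out on the truncations `Σ_{u < N}`, for which the identity holds
modulo `t^N`.
-/

section Telescoping

variable {A : Type*} [CommRing A]

theorem one_sub_mul_sum_range_pow_mul_sum_range (D : ℕ → A) (z : A) (N : ℕ) :
    (1 - z) * ∑ u ∈ Finset.range N, z ^ u * ∑ b ∈ Finset.range u, D b =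
      z * ∑ u ∈ Finset.range N, z ^ u * D u - z ^ N * ∑ b ∈ Finset.range N, D b := by
  induction N with
  | zero => simp
  | succ N ih =>
    simp only [Finset.sum_range_succ]
    linear_combination ih

theorem one_sub_mul_sum_range_pow_mul_tail (D T : ℕ → A) (g x : A)
    (hT : ∀ u, T u = D u + x * T (u + 1)) (N : ℕ) :
    (1 - g) * ∑ u ∈ Finset.range N, (g * x) ^ u * (x * T (u + 1)) =
      T 0 - ∑ u ∈ Finset.range N, (g * x) ^ u * D u - (g * x) ^ N * T N := by
  induction N with
  | zero => simp
  | succ N ih =>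
    simp only [Finset.sum_range_succ]
    linear_combination ih - (g * x) ^ N * hT N

end Telescoping

namespace PowerSeries

variable {R : Type*} [Semiring R]

theorem eq_zero_of_forall_X_pow_dvd {φ : R⟦X⟧} (h : ∀ N, X ^ N ∣ φ) : φ = 0 :=
  ext fun n => X_pow_dvd_iff.mp (h (n + 1)) n n.lt_succ_self

theorem coeff_X_mul_mk_one_mul (φ : R⟦X⟧) (n : ℕ) :
    coeff n (X * mk 1 * φ) = ∑ k ∈ Finset.range n, coeff k φ := by
  cases n with
  | zero => simp
  | succ n =>
    rw [mul_assoc, coeff_succ_X_mul, coeff_mul, Finset.Nat.sum_antidiagonal_eq_sum_range_succ_mk]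
    simp only [coeff_mk, Pi.one_apply, one_mul]
    exact Finset.sum_range_reflect (fun k => coeff k φ) (n + 1)

end PowerSeries

section CatalanPaths

variable {R : Type*} [CommSemiring R] {S : Set (ℕ × ℕ)}

theorem xPart_length (p : List (ℕ × ℕ)) : xPart p p.length = p.sum.1 := by
  induction p with
  | nil => rfl
  | cons s p ih => simp_all [xPart]

theorem yPart_length (p : List (ℕ × ℕ)) : yPart p p.length = p.sum.2 := by
  induction p with
  | nil => rfl
  | cons s p ih => simp_all [yPart]

theorem isPath_iff {n m : ℕ} {p : List (ℕ × ℕ)} :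
    IsPath S n m p ↔ (∀ s ∈ p, s ∈ S) ∧ p.sum = (n, m) := by
  rw [IsPath, xPart_length, yPart_length, Prod.ext_iff]

theorem finite_setOf_isPath (hS : (0, 0) ∉ S) (n m : ℕ) : {p | IsPath S n m p}.Finite := by
  refine ((List.finite_length_le (Set.Iic (n, m)) (n + m)).image
    (List.map Subtype.val)).subset fun p hp => ?_
  obtain ⟨hS', hsum⟩ := isPath_iff.mp hp
  have hle : ∀ s ∈ p, s ∈ Set.Iic (n, m) := fun s hs => hsum ▸ List.le_sum_of_mem hs
  have hlen : p.length ≤ n + m := by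
    have hpos : ∀ k ∈ p.map (fun s => s.1 + s.2), 1 ≤ k := by
      simp only [List.mem_map]
      rintro _ ⟨s, hs, rfl⟩
      have : s ≠ (0, 0) := fun h => hS (h ▸ hS' s hs)
      grind
    have hsum_coord : ∀ l : List (ℕ × ℕ), (l.map fun s => s.1 + s.2).sum = l.sum.1 + l.sum.2 := by
      intro l
      induction l with
      | nil => rfl
      | cons s l ih =>
        simp only [List.map_cons, List.sum_cons, ih, Prod.fst_add, Prod.snd_add]
        ring
    simpa [hsum_coord, hsum] using List.length_le_sum_of_one_le _ hpos
  lift p to List (Set.Iic (n, m)) using hle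
  exact ⟨p, by simpa using hlen, rfl⟩

theorem isCatalan_append_singleton {q : List (ℕ × ℕ)} {s : ℕ × ℕ} :
    IsCatalan (q ++ [s]) ↔ IsCatalan q ∧ (q.sum + s).1 ≤ (q.sum + s).2 := by
  have hx : ∀ j ≤ q.length, xPart (q ++ [s]) j = xPart q j := fun j hj => by
    simp [xPart, List.take_append_of_le_length hj]
  have hy : ∀ j ≤ q.length, yPart (q ++ [s]) j = yPart q j := fun j hj => by
    simp [yPart, List.take_append_of_le_length hj]
  have hend := xPart_length (q ++ [s])
  have hend' := yPart_length (q ++ [s])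
  simp only [List.length_append, List.length_singleton, List.sum_append, List.sum_singleton]
    at hend hend'
  constructor
  · intro h
    refine ⟨fun j hj => ?_, ?_⟩
    · rw [← hx j hj, ← hy j hj]; exact h j (by simp; omega)
    · rw [← hend, ← hend']; exact h _ (by simp)
  · rintro ⟨hq, hs⟩ j hj
    rcases Nat.lt_or_ge j (q.length + 1) with hlt | hge
    · rw [hx j (by omega), hy j (by omega)]; exact hq j (by omega)
    · obtain rfl : j = q.length + 1 := by simp at hj; omega
      rwa [hend, hend']

variable (S) in
def catalanPaths (v : ℕ × ℕ) : Set (List (ℕ × ℕ)) := {p | IsPath S v.1 v.2 p ∧ IsCatalan p}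

variable (S) in
theorem finite_catalanPaths (hS : (0, 0) ∉ S) (v : ℕ × ℕ) : (catalanPaths S v).Finite :=
  (finite_setOf_isPath hS v.1 v.2).subset fun _ hp => hp.1

theorem nil_mem_catalanPaths_iff {v : ℕ × ℕ} : [] ∈ catalanPaths S v ↔ v = 0 := by
  simp [catalanPaths, isPath_iff, IsCatalan, xPart, yPart, Prod.ext_iff, eq_comm]

theorem append_singleton_mem_catalanPaths_iff {v s : ℕ × ℕ} (hv : v.1 ≤ v.2)
    {q : List (ℕ × ℕ)} :
    q ++ [s] ∈ catalanPaths S v ↔ s ∈ S ∧ s ≤ v ∧ q ∈ catalanPaths S (v - s) := by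
  simp only [catalanPaths, Set.mem_ofPred_eq, isPath_iff, isCatalan_append_singleton,
    List.mem_append, List.mem_singleton, List.sum_append, List.sum_singleton, Prod.mk.eta]
  constructor
  · rintro ⟨⟨hS, hsum⟩, hcat, -⟩
    refine ⟨hS s (Or.inr rfl), hsum ▸ le_add_self, ⟨fun t ht => hS t (Or.inl ht), ?_⟩, hcat⟩
    exact (eq_tsub_iff_add_eq_of_le (hsum ▸ le_add_self)).mpr hsum
  · rintro ⟨hs, hsv, ⟨hS, hsum⟩, hcat⟩
    have hsum' : q.sum + s = v := (eq_tsub_iff_add_eq_of_le hsv).mp hsum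
    refine ⟨⟨?_, hsum'⟩, hcat, hsum' ▸ hv⟩
    rintro t (ht | rfl)
    exacts [hS t ht, hs]

theorem catalanPaths_eq_union {v : ℕ × ℕ} (hv : v.1 ≤ v.2) :
    catalanPaths S v = {p | p = [] ∧ v = 0} ∪
      ⋃ s ∈ S ∩ Set.Iic v, (· ++ [s]) '' catalanPaths S (v - s) := by
  ext p
  rcases p.eq_nil_or_concat with rfl | ⟨q, s, rfl⟩
  · simp [nil_mem_catalanPaths_iff]
  · simp only [List.concat_eq_append, append_singleton_mem_catalanPaths_iff hv]
    simp [-Prod.exists]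
    tauto

variable (S) in
noncomputable def catalanWeight (w : ℕ × ℕ → R) (v : ℕ × ℕ) : R :=
  ∑ᶠ p ∈ catalanPaths S v, (p.map w).prod

theorem catalanWeight_eq_ite_add_finsum (hS : (0, 0) ∉ S) (w : ℕ × ℕ → R) {v : ℕ × ℕ}
    (hv : v.1 ≤ v.2) :
    catalanWeight S w v = (if v = 0 then 1 else 0) +
      ∑ᶠ s ∈ S ∩ Set.Iic v, w s * catalanWeight S w (v - s) := by
  have hsteps : (S ∩ Set.Iic v).Finite := (Set.finite_Iic v).inter_of_right S
  rw [catalanWeight, catalanPaths_eq_union hv, finsum_mem_union, finsum_mem_biUnion]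
  · congr 1
    · by_cases h : v = 0 <;> simp [h]
    · refine finsum_mem_congr rfl fun s _ => ?_
      rw [finsum_mem_image (List.append_left_injective [s]).injOn, catalanWeight,
        mul_finsum_mem' _ _ (finite_catalanPaths S hS _)]
      simp [mul_comm]
  · rintro s - t - hst
    simp only [Function.onFun, Set.disjoint_left, Set.mem_image]
    rintro _ ⟨q, -, rfl⟩ ⟨q', -, h⟩
    exact hst (List.singleton_inj.mp (List.append_inj' h rfl).2).symm
  · exact hsteps
  · exact fun s _ => (finite_catalanPaths S hS _).image _
  · simp [Set.disjoint_left]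
  · exact (Set.finite_singleton []).subset fun p hp => hp.1
  · exact hsteps.biUnion fun s _ => (finite_catalanPaths S hS _).image _

theorem catalanWeight_eq_zero_of_lt (w : ℕ × ℕ → R) {v : ℕ × ℕ} (hv : v.2 < v.1) :
    catalanWeight S w v = 0 := by
  have : catalanPaths S v = ∅ := by
    refine Set.eq_empty_of_forall_notMem fun p hp => ?_
    obtain ⟨⟨-, hx, hy⟩, hcat⟩ := hp
    have := hcat p.length le_rfl
    omega
  rw [catalanWeight, this, finsum_mem_empty]

theorem catalanWeight_zero (hS : (0, 0) ∉ S) (w : ℕ × ℕ → R) : catalanWeight S w 0 = 1 := by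
  have : S ∩ Set.Iic 0 = ∅ := by
    ext s
    simp only [Set.mem_inter_iff, Set.mem_Iic, nonpos_iff_eq_zero, Set.mem_empty_iff_false,
      iff_false, not_and]
    rintro hs rfl
    exact hS hs
  rw [catalanWeight_eq_ite_add_finsum hS w le_rfl, this, finsum_mem_empty, if_pos rfl, add_zero]

end CatalanPaths

section QueenPaths

theorem zero_notMem_queenSteps : ((0, 0) : ℕ × ℕ) ∉ queenSteps := by
  rintro (⟨a, ha, h⟩ | ⟨a, ha, h⟩ | ⟨a, ha, h⟩) <;> simp [Prod.ext_iff] at h <;> omega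

theorem queenSteps_inter_Iic (x u : ℕ) :
    queenSteps ∩ Set.Iic (x, x + u) =
      ((fun i => (x - i, 0)) '' Set.Iio x ∪ (fun j => (0, x + u - j)) '' Set.Iio (x + u)) ∪
        (fun k => (x - k, x - k)) '' Set.Iio x := by
  ext ⟨a, b⟩
  simp only [queenSteps, Set.mem_inter_iff, Set.mem_ofPred_eq, Set.mem_Iic, Set.mem_union,
    Set.mem_image, Set.mem_Iio, Prod.mk_le_mk, Prod.mk.injEq]
  constructor
  · rintro ⟨⟨c, hc, hab⟩ | ⟨c, hc, hab⟩ | ⟨c, hc, hab⟩, hx, hy⟩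
    · exact Or.inl (Or.inl ⟨x - a, by omega, by omega⟩)
    · exact Or.inl (Or.inr ⟨x + u - b, by omega, by omega⟩)
    · exact Or.inr ⟨x - a, by omega, by omega⟩
  · rintro ((⟨i, hi, hab⟩ | ⟨j, hj, hab⟩) | ⟨k, hk, hab⟩)
    · exact ⟨Or.inl ⟨a, by omega, by omega⟩, by omega, by omega⟩
    · exact ⟨Or.inr (Or.inl ⟨b, by omega, by omega⟩), by omega, by omega⟩
    · exact ⟨Or.inr (Or.inr ⟨a, by omega, by omega⟩), by omega, by omega⟩

theorem finsum_mem_queenSteps_inter_Iic {M : Type*} [AddCommMonoid M] (f : ℕ × ℕ → M)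
    (x u : ℕ) :
    ∑ᶠ s ∈ queenSteps ∩ Set.Iic (x, x + u), f s =
      ∑ i ∈ Finset.range x, f (x - i, 0) + ∑ j ∈ Finset.range (x + u), f (0, x + u - j) +
        ∑ k ∈ Finset.range x, f (x - k, x - k) := by
  rw [queenSteps_inter_Iic, finsum_mem_union, finsum_mem_union, finsum_mem_image,
    finsum_mem_image, finsum_mem_image, ← Finset.coe_range, ← Finset.coe_range,
    finsum_mem_coe_finset, finsum_mem_coe_finset, finsum_mem_coe_finset]
  iterate 3 exact fun i hi j hj h => by simp only [Set.mem_Iio, Prod.mk.injEq] at hi hj h; omega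
  · simp only [Set.disjoint_left, Set.mem_image, Set.mem_Iio, not_exists, not_and]
    rintro _ ⟨i, hi, rfl⟩ j hj h
    simp only [Prod.mk.injEq] at h
    omega
  · exact Set.toFinite _
  · exact Set.toFinite _
  · simp only [Set.disjoint_left, Set.mem_union, Set.mem_image, Set.mem_Iio, not_exists, not_and]
    rintro _ (⟨i, hi, rfl⟩ | ⟨i, hi, rfl⟩) j hj h <;> simp only [Prod.mk.injEq] at h <;> omega
  · exact Set.toFinite _
  · exact Set.toFinite _

variable {R : Type*} [CommSemiring R] (ρ ω : R)

noncomputable def queenWeight (s : ℕ × ℕ) : R :=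
  (if s.1 = 0 ∨ s.2 = 0 then ρ else 1) * (if s.1 = s.2 then ω else 1)

theorem prod_map_queenWeight (p : List (ℕ × ℕ)) :
    (p.map (queenWeight ρ ω)).prod =
      ρ ^ p.countP (fun st => st.1 == 0 || st.2 == 0) * ω ^ p.countP (fun st => st.1 == st.2) := by
  induction p with
  | nil => simp
  | cons s p ih =>
    simp only [List.map_cons, List.prod_cons, ih, List.countP_cons, queenWeight]
    split_ifs <;> simp_all [pow_succ] <;> ring

theorem pQueenW_eq_catalanWeight (n : ℕ) :
    pQueenW n =
      catalanWeight queenSteps (queenWeight (MvPolynomial.X 0) (MvPolynomial.X 1)) (n, n) :=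
  finsum_mem_congr rfl fun p _ => (prod_map_queenWeight _ _ p).symm

local notation "W" => catalanWeight queenSteps (queenWeight ρ ω)

theorem catalanWeight_queenSteps (x u : ℕ) :
    W (x, x + u) = (if x = 0 ∧ u = 0 then 1 else 0) +
      ρ * ∑ i ∈ Finset.range x, W (i, x + u) + ρ * ∑ b ∈ Finset.range u, W (x, x + b) +
      ω * ∑ k ∈ Finset.range x, W (k, k + u) := by
  have hH : ∀ i ∈ Finset.range x,
      queenWeight ρ ω (x - i, 0) * W ((x, x + u) - (x - i, 0)) = ρ * W (i, x + u) := by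
    intro i hi
    rw [Finset.mem_range] at hi
    simp [queenWeight, Prod.mk_sub_mk, Nat.sub_sub_self hi.le, show x - i ≠ 0 by omega]
  have hV : ∀ j ∈ Finset.range (x + u),
      queenWeight ρ ω (0, x + u - j) * W ((x, x + u) - (0, x + u - j)) = ρ * W (x, j) := by
    intro j hj
    rw [Finset.mem_range] at hj
    simp [queenWeight, Prod.mk_sub_mk, Nat.sub_sub_self hj.le, show 0 ≠ x + u - j by omega]
  have hD : ∀ k ∈ Finset.range x,
      queenWeight ρ ω (x - k, x - k) * W ((x, x + u) - (x - k, x - k)) = ω * W (k, k + u) := by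
    intro k hk
    rw [Finset.mem_range] at hk
    simp [queenWeight, Prod.mk_sub_mk, show x - k ≠ 0 by omega,
      show x + u - (x - k) = k + u by omega, Nat.sub_sub_self hk.le]
  have hbelow : ∑ j ∈ Finset.range x, W (x, j) = 0 :=
    Finset.sum_eq_zero fun j hj => catalanWeight_eq_zero_of_lt _ (Finset.mem_range.mp hj)
  rw [catalanWeight_eq_ite_add_finsum zero_notMem_queenSteps _ (by simp),
    finsum_mem_queenSteps_inter_Iic, Finset.sum_congr rfl hH, Finset.sum_congr rfl hV,
    Finset.sum_congr rfl hD, ← Finset.mul_sum, ← Finset.mul_sum, ← Finset.mul_sum,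
    Finset.sum_range_add, hbelow, zero_add]
  simp only [Prod.ext_iff, Prod.fst_zero, Prod.snd_zero, Nat.add_eq_zero_iff, and_self_left]
  ring

end QueenPaths

section CatalyticSeries

open PowerSeries

variable {R : Type*} [CommSemiring R] (W : ℕ × ℕ → R)

noncomputable def heightSeries (u : ℕ) : R⟦X⟧ := mk fun x => W (x, x + u)

/-- `tailSeries W u = Σ_a X^a * heightSeries W (u + a)`. -/
noncomputable def tailSeries (u : ℕ) : R⟦X⟧ :=
  mk fun x => ∑ i ∈ Finset.range (x + 1), W (i, x + u)

/-- The catalytic variable `z` of `Σ_u zᵘ * heightSeries W u` evaluated at `z = g X`, truncated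
at height `N`. -/
noncomputable def catalyticSum (g : R⟦X⟧) (N : ℕ) : R⟦X⟧ :=
  ∑ u ∈ Finset.range N, (g * X) ^ u * heightSeries W u

theorem coeff_X_mul_tailSeries_succ (u x : ℕ) :
    coeff x (X * tailSeries W (u + 1)) = ∑ i ∈ Finset.range x, W (i, x + u) := by
  cases x with
  | zero => simp
  | succ x => simp [coeff_succ_X_mul, tailSeries, Nat.add_right_comm x 1 u, add_assoc]

theorem tailSeries_eq_heightSeries_add (u : ℕ) :
    tailSeries W u = heightSeries W u + X * tailSeries W (u + 1) := by
  ext x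
  rw [map_add, coeff_X_mul_tailSeries_succ]
  simp [tailSeries, heightSeries, Finset.sum_range_succ, add_comm]

theorem constantCoeff_catalyticSum_succ (g : R⟦X⟧) (N : ℕ) :
    constantCoeff (catalyticSum W g (N + 1)) = W 0 := by
  simp [catalyticSum, Finset.sum_range_succ', heightSeries, Prod.mk_zero_zero]

end CatalyticSeries

section QueenKernel

open PowerSeries

variable {R : Type*} [CommRing R] (ρ ω : R)

local notation "W" => catalanWeight queenSteps (queenWeight ρ ω)

theorem heightSeries_queen (u : ℕ) :
    heightSeries W u = (if u = 0 then 1 else 0) + C ρ * (X * tailSeries W (u + 1)) +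
      C ρ * ∑ b ∈ Finset.range u, heightSeries W b + C ω * (X * mk 1 * heightSeries W u) := by
  ext x
  have hδ : coeff x (if u = 0 then (1 : R⟦X⟧) else 0) = if x = 0 ∧ u = 0 then 1 else 0 := by
    by_cases hu : u = 0 <;> simp [hu, coeff_one]
  simp only [map_add, coeff_C_mul, coeff_X_mul_tailSeries_succ, coeff_X_mul_mk_one_mul, map_sum,
    hδ, heightSeries, coeff_mk]
  exact catalanWeight_queenSteps ρ ω x u

/-- `heightSeries_queen` multiplied by `g ^ u * X ^ u` and summed over `u` is a linear equation
for `F = Σ_u (g X)^u * heightSeries u`; `queenKernel ρ ω g` is its kernel, cleared of the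
denominators `1 - X`, `1 - g X` and `1 - g`. -/
noncomputable def queenKernel (g : R⟦X⟧) : R⟦X⟧ :=
  (1 - X) * (1 - g * X) * (1 - g) - C ρ * (1 - X) * (1 - g) * (g * X) +
    C ρ * (1 - X) * (1 - g * X) - C ω * X * (1 - g * X) * (1 - g)

theorem X_pow_dvd_queenKernel_mul_catalyticSum_sub (g : R⟦X⟧) (N : ℕ) :
    X ^ N ∣ queenKernel ρ ω g * catalyticSum W g N -
      (1 - X) * (1 - g * X) * (1 - g + C ρ * tailSeries W 0) := by
  rcases N with _ | N
  · simp
  have hfunctional : catalyticSum W g (N + 1) =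
      1 + C ρ * ∑ u ∈ Finset.range (N + 1), (g * X) ^ u * (X * tailSeries W (u + 1)) +
        C ρ * ∑ u ∈ Finset.range (N + 1), (g * X) ^ u * ∑ b ∈ Finset.range u, heightSeries W b +
        C ω * (X * mk 1 * catalyticSum W g (N + 1)) := by
    have hδ : ∑ u ∈ Finset.range (N + 1), (g * X) ^ u * (if u = 0 then 1 else 0) = 1 := by
      simp
    rw [← hδ, catalyticSum, Finset.mul_sum, Finset.mul_sum, Finset.mul_sum, Finset.mul_sum,
      ← Finset.sum_add_distrib, ← Finset.sum_add_distrib, ← Finset.sum_add_distrib]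
    refine Finset.sum_congr rfl fun u _ => ?_
    conv_lhs => rw [heightSeries_queen]
    ring
  have hV := one_sub_mul_sum_range_pow_mul_sum_range (heightSeries W) (g * X) (N + 1)
  have hU := one_sub_mul_sum_range_pow_mul_tail _ _ g X (tailSeries_eq_heightSeries_add W) (N + 1)
  rw [← catalyticSum] at hV hU
  have hremainder : queenKernel ρ ω g * catalyticSum W g (N + 1) -
      (1 - X) * (1 - g * X) * (1 - g + C ρ * tailSeries W 0) =
      (g * X) ^ (N + 1) * -(C ρ * (1 - X) * ((1 - g * X) * tailSeries W (N + 1) +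
        (1 - g) * ∑ b ∈ Finset.range (N + 1), heightSeries W b)) := by
    rw [queenKernel]
    linear_combination (1 - X) * (1 - g * X) * (1 - g) * hfunctional
      + C ρ * (1 - X) * (1 - g * X) * hU + C ρ * (1 - X) * (1 - g) * hV
      + C ω * X * (1 - g * X) * (1 - g) * catalyticSum W g (N + 1) * mk_one_mul_one_sub_eq_one R
  rw [hremainder, mul_pow, mul_assoc]
  exact dvd_mul_of_dvd_right (dvd_mul_right _ _) _

theorem queenKernel_one_add_C_mul_tailSeries :
    queenKernel ρ ω (1 + C ρ * tailSeries W 0) = 0 := by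
  refine eq_zero_of_forall_X_pow_dvd fun N => (pow_dvd_pow X N.le_succ).trans ?_
  have hunit : IsUnit (catalyticSum W (1 + C ρ * tailSeries W 0) (N + 1)) := by
    rw [isUnit_iff_constantCoeff, constantCoeff_catalyticSum_succ,
      catalanWeight_zero zero_notMem_queenSteps]
    exact isUnit_one
  have h := X_pow_dvd_queenKernel_mul_catalyticSum_sub ρ ω (1 + C ρ * tailSeries W 0) (N + 1)
  rw [sub_add_cancel_left, neg_add_cancel, mul_zero, sub_zero] at h
  exact hunit.dvd_mul_right.mp h

theorem queenKernel_zero_mul_heightSeries_zero :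
    queenKernel ρ ω 0 * heightSeries W 0 = (1 - X) * (1 + C ρ * tailSeries W 0) := by
  rw [← sub_eq_zero]
  refine eq_zero_of_forall_X_pow_dvd fun N => (pow_dvd_pow X N.le_succ).trans ?_
  simpa [catalyticSum, Finset.sum_range_succ'] using
    X_pow_dvd_queenKernel_mul_catalyticSum_sub ρ ω 0 (N + 1)

end QueenKernel

open PowerSeries in
theorem quadratic_eq_zero_of_queenKernel {R : Type*} [CommRing R] [IsDomain R] {ρ ω : R}
    (hρ : 1 + ρ ≠ 0) {P T : R⟦X⟧} (hτ : queenKernel ρ ω (1 + C ρ * T) = 0)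
    (h₀ : queenKernel ρ ω 0 * P = (1 - X) * (1 + C ρ * T)) :
    X * (C ρ + 1 - (C ρ + C ω + 1) * X) ^ 2 * P ^ 2 -
      (1 - X) * (1 - (C ω - 2 * C ρ) * X - (C ω + 2 * C ρ + 1) * X ^ 2) * P +
      (1 - X) ^ 2 = 0 := by
  have hK₀ : queenKernel ρ ω 0 = (1 + C ρ) * (1 - X) - C ω * X := by
    rw [queenKernel]; ring
  have hK₀_ne : queenKernel ρ ω 0 ≠ 0 := fun h => hρ <| by
    simpa [hK₀] using congrArg constantCoeff h
  refine mul_left_cancel₀ hK₀_ne ?_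
  rw [hK₀] at h₀ ⊢
  rw [queenKernel] at hτ
  generalize 1 + C ρ * T = τ at hτ h₀
  linear_combination (1 - X) ^ 2 * hτ
    + (X * (1 - X) * ((1 + C ρ) * (1 - X) - C ω * X) * τ
        + P * X * ((1 + C ρ) * (1 - X) - C ω * X) ^ 2
        + (1 - X) * ((1 + X) * (C ω * X - (1 - X)) - 2 * C ρ * X * (1 - X))) * h₀

theorem stmt17 (Pw : PowerSeries (MvPolynomial (Fin 2) ℚ))
    (hP : Pw = PowerSeries.mk pQueenW) :
    PowerSeries.X * (ρq + 1 - (ρq + ωq + 1) * PowerSeries.X) ^ 2 * Pw ^ 2 -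
      (1 - PowerSeries.X) *
        (1 - (ωq - 2 * ρq) * PowerSeries.X - (ωq + 2 * ρq + 1) * PowerSeries.X ^ 2) * Pw +
      (1 - PowerSeries.X) ^ 2 = 0 := by
  have hρ : (1 + MvPolynomial.X 0 : MvPolynomial (Fin 2) ℚ) ≠ 0 := fun h => by
    simpa using congrArg MvPolynomial.constantCoeff h
  have hPw : Pw = heightSeries
      (catalanWeight queenSteps (queenWeight (MvPolynomial.X 0) (MvPolynomial.X 1))) 0 := by
    ext n
    simp [hP, heightSeries, pQueenW_eq_catalanWeight]
  rw [hPw]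
  exact quadratic_eq_zero_of_queenKernel hρ (queenKernel_one_add_C_mul_tailSeries _ _)
    (queenKernel_zero_mul_heightSeries_zero _ _)
end

section
/- Let S be a step set that contains every horizontal step (a,0) with a ≥ 1 and such that every (a,b) ∈ S with b > 0 satisfies a ≤ 2b (the slope condition for the boundary (2i+1)). For n ≥ 0 let p_n be the number of S-paths from (0,0) to (2n,n) with boundary (2i+1), i.e. such that every node (x,i) satisfies x ≤ 2i, and let P(t) = Σ_{n≥0} p_n tⁿ. Let T(t) = Σ_{a≥1, (2a,a)∈S} tᵃ, let E(t) be the formal power series whose coefficient of tⁿ is Σ_{j=0}^{2n} a_{j,n}, and let F(t) be the formal power series with zero constant term whose coefficient of tⁿ (n ≥ 1) is Σ_{j=0}^{2n−1} a_{j,n}. Then in ℚ⟦t⟧: P(t) · (1 + (2 − T(t)) · F(t)) = E(t). -/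
/-- `p` has (right) boundary `s`: every node `(x, i)` satisfies `x < s i`. -/
def HasBoundary (s : ℕ → ℕ) (p : List (ℕ × ℕ)) : Prop :=
  ∀ j ≤ p.length, xPart p j < s (yPart p j)

/-!
Write `P n`, `C n`, `D n` for the bounded paths ending at `(2n, n)`, ending at height `n`, and
ending at height `n` strictly left of the line `x = 2y`; `F n` for all paths ending at height `n`
strictly left of that line, and `G n` for all paths ending at `(2n, n)`, so that `E = F + G`.

* `C = P + D`, since a bounded path at height `n` ends at some `x ≤ 2n`.
* `P = 1 + D + T P`: by the slope condition, the last step of a bounded path ending on the line is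
  either horizontal (and the path before it is counted by `D`) or of the form `(2a, a)`.
* `G = P + C F`: cut an unbounded path at its first node beyond the boundary. The slope condition
  forces the step into that node to be horizontal, the part before it is bounded, the part after it
  ends strictly left of the line, and the length of the horizontal step is determined by the
  endpoint `(2n, n)`.

Hence `P (1 + (2 - T) F) = P + (P + 1 + D) F = P + (C + 1) F = G + F = E`.
-/

namespace List

variable {α : Type*} {Q : List α → Prop}

theorem exists_eq_append_cons_of_not_forall_prefix (hnil : Q []) {p : List α}
    (hp : ¬ ∀ q, q <+: p → Q q) :
    ∃ c a w, p = c ++ a :: w ∧ (∀ q, q <+: c → Q q) ∧ ¬ Q (c ++ [a]) := by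
  induction p using List.reverseRecOn with
  | nil => exact absurd (fun q hq => List.prefix_nil.1 hq ▸ hnil) hp
  | append_singleton l a ih =>
    by_cases hl : ∀ q, q <+: l → Q q
    · refine ⟨l, a, [], rfl, hl, fun ha => hp fun q hq => ?_⟩
      rcases List.prefix_concat_iff.1 hq with rfl | hq
      exacts [ha, hl q hq]
    · obtain ⟨c, b, w, rfl, hc, hb⟩ := ih hl
      exact ⟨c, b, w ++ [a], by simp, hc, hb⟩

theorem eq_of_append_cons_eq_of_forall_prefix {c c' w w' : List α} {a a' : α}
    (hc : ∀ q, q <+: c → Q q) (ha : ¬ Q (c ++ [a]))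
    (hc' : ∀ q, q <+: c' → Q q) (ha' : ¬ Q (c' ++ [a']))
    (h : c ++ a :: w = c' ++ a' :: w') : c = c' ∧ a = a' ∧ w = w' := by
  wlog hlen : c.length ≤ c'.length generalizing c c' w w' a a'
  · obtain ⟨h₁, h₂, h₃⟩ := this hc' ha' hc ha h.symm (by omega)
    exact ⟨h₁.symm, h₂.symm, h₃.symm⟩
  obtain hlt | heq := hlen.lt_or_eq
  · have hpre : c ++ [a] <+: c' ++ a' :: w' := h ▸ ⟨w, by simp⟩
    have : c ++ [a] <+: c' :=
      List.prefix_of_prefix_length_le hpre (List.prefix_append _ _) (by simpa using hlt)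
    exact absurd (hc' _ this) ha
  · obtain ⟨rfl, hw⟩ := List.append_inj h heq
    simpa using hw

end List

namespace StepPath

open Finset

def pathsTo (S R : Set (ℕ × ℕ)) : Set (List (ℕ × ℕ)) :=
  {p | (∀ st ∈ p, st ∈ S) ∧ p.sum ∈ R}

-- The nodes of a path are the sums of its prefixes.
def InBoundary (p : List (ℕ × ℕ)) : Prop :=
  ∀ q, q <+: p → q.sum.1 ≤ 2 * q.sum.2

def boundedPathsTo (S R : Set (ℕ × ℕ)) : Set (List (ℕ × ℕ)) :=
  {p ∈ pathsTo S R | InBoundary p}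

def leftRow (n : ℕ) : Set (ℕ × ℕ) := {e | e.2 = n ∧ e.1 < 2 * n}

def cutPairs (S : Set (ℕ × ℕ)) (n : ℕ) : Set (List (ℕ × ℕ) × List (ℕ × ℕ)) :=
  ⋃ x ∈ (antidiagonal n : Set (ℕ × ℕ)),
    boundedPathsTo S {e | e.2 = x.1} ×ˢ pathsTo S (leftRow x.2)

def joinHoriz (n : ℕ) (c w : List (ℕ × ℕ)) : List (ℕ × ℕ) :=
  c ++ (2 * n - (c.sum.1 + w.sum.1), 0) :: w

noncomputable def countSeries {α : Type*} (A : ℕ → Set α) : PowerSeries ℚ :=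
  PowerSeries.mk fun n => ((A n).ncard : ℚ)

theorem coeff_countSeries {α : Type*} (A : ℕ → Set α) (n : ℕ) :
    PowerSeries.coeff n (countSeries A) = (A n).ncard :=
  PowerSeries.coeff_mk _ _

variable {S : Set (ℕ × ℕ)}

theorem xPart_eq_sum_take (p : List (ℕ × ℕ)) (j : ℕ) : xPart p j = (p.take j).sum.1 :=
  (map_list_sum (AddMonoidHom.fst ℕ ℕ) _).symm

theorem yPart_eq_sum_take (p : List (ℕ × ℕ)) (j : ℕ) : yPart p j = (p.take j).sum.2 :=
  (map_list_sum (AddMonoidHom.snd ℕ ℕ) _).symm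

theorem isPath_iff_mem_pathsTo {n m : ℕ} {p : List (ℕ × ℕ)} :
    IsPath S n m p ↔ p ∈ pathsTo S {(n, m)} := by
  simp [IsPath, pathsTo, xPart_eq_sum_take, yPart_eq_sum_take, Prod.ext_iff]

theorem hasBoundary_iff_inBoundary {p : List (ℕ × ℕ)} :
    HasBoundary (fun i => 2 * i + 1) p ↔ InBoundary p := by
  simp only [HasBoundary, InBoundary, xPart_eq_sum_take, yPart_eq_sum_take, Nat.lt_succ_iff]
  constructor
  · intro h q hq
    rw [List.prefix_iff_eq_take.1 hq]
    exact h _ hq.length_le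
  · exact fun h j _ => h _ (List.take_prefix j p)

@[simp] theorem inBoundary_nil : InBoundary [] := by
  simp [InBoundary]

theorem inBoundary_concat {p : List (ℕ × ℕ)} {a : ℕ × ℕ} :
    InBoundary (p ++ [a]) ↔ InBoundary p ∧ (p.sum + a).1 ≤ 2 * (p.sum + a).2 := by
  simp only [InBoundary, List.prefix_concat_iff, forall_eq_or_imp, List.sum_append,
    List.sum_singleton]
  exact and_comm

theorem InBoundary.sum_fst_le {p : List (ℕ × ℕ)} (hp : InBoundary p) :
    p.sum.1 ≤ 2 * p.sum.2 :=
  hp p (List.prefix_refl p)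

theorem concat_mem_boundedPathsTo {R : Set (ℕ × ℕ)} {p : List (ℕ × ℕ)} {a : ℕ × ℕ} :
    p ++ [a] ∈ boundedPathsTo S R ↔ (∀ st ∈ p, st ∈ S) ∧ a ∈ S ∧ p.sum + a ∈ R ∧
      InBoundary p ∧ (p.sum + a).1 ≤ 2 * (p.sum + a).2 := by
  simp only [boundedPathsTo, pathsTo, Set.mem_ofPred_eq, List.mem_append, List.mem_singleton,
    or_imp, forall_and, forall_eq, List.sum_append, List.sum_singleton, inBoundary_concat,
    and_assoc]

theorem boundedPathsTo_origin (h00 : (0, 0) ∉ S) : boundedPathsTo S {(0, 0)} = {[]} := by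
  ext p
  refine ⟨fun ⟨⟨hS, hsum⟩, _⟩ => ?_, fun hp => ?_⟩
  · rcases p with _ | ⟨st, p⟩
    · rfl
    simp only [List.sum_cons, Set.mem_singleton_iff, Prod.ext_iff, Prod.fst_add, Prod.snd_add]
      at hsum
    exact absurd (hS st (by simp)) (by convert h00 using 2; ext <;> simp only <;> omega)
  · rw [Set.mem_singleton_iff.1 hp]
    exact ⟨⟨by simp, rfl⟩, inBoundary_nil⟩

theorem finite_pathsTo_sum_le (h00 : (0, 0) ∉ S) (N : ℕ) :
    (pathsTo S {e | e.1 + e.2 ≤ N}).Finite := by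
  have hpos {st : ℕ × ℕ} (hst : st ∈ S) : 0 < st.1 + st.2 := by
    by_contra h
    exact h00 (by convert hst using 1; ext <;> dsimp only <;> omega)
  induction N with
  | zero =>
    refine (Set.finite_singleton []).subset ?_
    rintro (_ | ⟨st, p⟩) ⟨hS, hN⟩
    · rfl
    · have := hpos (hS st List.mem_cons_self)
      simp only [Set.mem_ofPred_eq, List.sum_cons, Prod.fst_add, Prod.snd_add] at hN
      omega
  | succ N ih =>
    refine ((((Set.finite_Iic (N + 1)).prod (Set.finite_Iic (N + 1))).image2
      (· :: ·) ih).insert []).subset ?_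
    rintro (_ | ⟨st, p⟩) ⟨hS, hN⟩
    · exact Set.mem_insert _ _
    · have := hpos (hS st List.mem_cons_self)
      simp only [Set.mem_ofPred_eq, List.sum_cons, Prod.fst_add, Prod.snd_add] at hN
      refine Or.inr ⟨st, ⟨?_, ?_⟩, p, ⟨fun x hx => hS x (List.mem_cons_of_mem _ hx), ?_⟩, rfl⟩ <;>
        simp only [Set.mem_Iic, Set.mem_ofPred_eq] <;> omega

theorem finite_pathsTo (h00 : (0, 0) ∉ S) {R : Set (ℕ × ℕ)} (hR : R.Finite) :
    (pathsTo S R).Finite := by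
  obtain ⟨N, hN⟩ := (hR.image fun e => e.1 + e.2).bddAbove
  exact (finite_pathsTo_sum_le h00 N).subset fun p ⟨hS, hp⟩ => ⟨hS, hN ⟨_, hp, rfl⟩⟩

theorem finite_boundedPathsTo (h00 : (0, 0) ∉ S) {R : Set (ℕ × ℕ)} (hR : R.Finite) :
    (boundedPathsTo S R).Finite :=
  (finite_pathsTo h00 hR).subset fun _ hp => hp.1

theorem finite_boundedPathsTo_row (h00 : (0, 0) ∉ S) (n : ℕ) :
    (boundedPathsTo S {e | e.2 = n}).Finite := by
  refine (finite_pathsTo h00 ((Set.finite_Iic (2 * n)).prod (Set.finite_singleton n))).subset ?_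
  rintro p ⟨⟨hS, hn⟩, hb⟩
  exact ⟨hS, hn ▸ hb.sum_fst_le, hn⟩

theorem finite_leftRow (n : ℕ) : (leftRow n).Finite :=
  ((Set.finite_Iio (2 * n)).prod (Set.finite_singleton n)).subset fun _ ⟨h₁, h₂⟩ => ⟨h₂, h₁⟩

theorem ncard_pathsTo_eq_sum (h00 : (0, 0) ∉ S) (R : Finset (ℕ × ℕ)) :
    (pathsTo S R).ncard = ∑ e ∈ R, (pathsTo S {e}).ncard := by
  have hunion : pathsTo S R = ⋃ e ∈ (R : Set (ℕ × ℕ)), pathsTo S {e} := by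
    ext p; simp [pathsTo]
  rw [hunion, Set.Finite.ncard_biUnion R.finite_toSet
    (fun e _ => finite_pathsTo h00 (Set.finite_singleton e)), finsum_mem_coe_finset]
  intro e _ e' _ hne
  exact Set.disjoint_left.2 fun p hp hp' => hne (hp.2.symm.trans hp'.2)

theorem ncard_pathsTo_leftRow (h00 : (0, 0) ∉ S) (n : ℕ) :
    (pathsTo S (leftRow n)).ncard = ∑ j ∈ range (2 * n), aCount S j n := by
  have hrow : leftRow n = ((range (2 * n)).image fun j => (j, n) : Set (ℕ × ℕ)) := by
    ext ⟨x, y⟩; simp [leftRow, and_comm, eq_comm]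
  have haCount (j : ℕ) : aCount S j n = (pathsTo S {(j, n)}).ncard := by
    simp only [aCount, isPath_iff_mem_pathsTo, Set.ofPred_mem_eq]
  rw [hrow, ncard_pathsTo_eq_sum h00, sum_image (by simp)]
  simp only [haCount]

theorem ncard_boundedPathsTo_row (h00 : (0, 0) ∉ S) (n : ℕ) :
    (boundedPathsTo S {e | e.2 = n}).ncard =
      (boundedPathsTo S {(2 * n, n)}).ncard + (boundedPathsTo S (leftRow n)).ncard := by
  have hsplit : boundedPathsTo S {e | e.2 = n} =
      boundedPathsTo S {(2 * n, n)} ∪ boundedPathsTo S (leftRow n) := by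
    ext p
    simp only [boundedPathsTo, pathsTo, leftRow, Set.mem_union, Set.mem_ofPred_eq,
      Set.mem_singleton_iff, Prod.ext_iff]
    constructor
    · rintro ⟨⟨hS, rfl⟩, hb⟩
      rcases hb.sum_fst_le.eq_or_lt with h | h
      exacts [Or.inl ⟨⟨hS, h, rfl⟩, hb⟩, Or.inr ⟨⟨hS, rfl, h⟩, hb⟩]
    · rintro (⟨⟨hS, hx, hn⟩, hb⟩ | ⟨⟨hS, hn, hx⟩, hb⟩) <;> exact ⟨⟨hS, hn⟩, hb⟩
  rw [hsplit, Set.ncard_union_eq _ (finite_boundedPathsTo h00 (Set.finite_singleton _))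
    (finite_boundedPathsTo h00 (finite_leftRow n))]
  refine Set.disjoint_left.2 fun p ⟨⟨_, hp⟩, _⟩ ⟨⟨_, hp'⟩, _⟩ => ?_
  simp only [Set.mem_singleton_iff, leftRow, Set.mem_ofPred_eq] at hp hp'
  rw [hp] at hp'
  exact lt_irrefl _ hp'.2

section SlopeCondition

variable (h00 : (0, 0) ∉ S) (hhoriz : ∀ a : ℕ, 1 ≤ a → (a, 0) ∈ S)
  (hslope : ∀ a b : ℕ, (a, b) ∈ S → 0 < b → a ≤ 2 * b)

include hslope in
theorem snd_eq_zero_of_leaves_boundary {p : List (ℕ × ℕ)} {a : ℕ × ℕ} (ha : a ∈ S)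
    (hp : p.sum.1 ≤ 2 * p.sum.2) (hpa : ¬ (p ++ [a]).sum.1 ≤ 2 * (p ++ [a]).sum.2) :
    a.2 = 0 := by
  have := hslope a.1 a.2 ha
  simp only [List.sum_append, List.sum_singleton, Prod.fst_add, Prod.snd_add] at hpa
  omega

include hhoriz in
theorem joinHoriz_mem_pathsTo {n : ℕ} {c w : List (ℕ × ℕ)} (hcw : (c, w) ∈ cutPairs S n) :
    joinHoriz n c w ∈ pathsTo S {(2 * n, n)} ∧
      ¬ (c ++ [(2 * n - (c.sum.1 + w.sum.1), 0)]).sum.1 ≤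
        2 * (c ++ [(2 * n - (c.sum.1 + w.sum.1), 0)]).sum.2 := by
  simp only [cutPairs, Set.mem_iUnion, Set.mem_prod, exists_prop, mem_coe] at hcw
  obtain ⟨x, hx, ⟨⟨hcS, hcy⟩, hcb⟩, hwS, hwy, hwx⟩ := hcw
  have := hcb.sum_fst_le
  simp only [HasAntidiagonal.mem_antidiagonal] at hx
  simp only [Set.mem_ofPred_eq] at hcy
  refine ⟨⟨?_, ?_⟩, ?_⟩
  · simp only [joinHoriz, List.mem_append, List.mem_cons]
    rintro st (hst | rfl | hst)
    exacts [hcS st hst, hhoriz _ (by omega), hwS st hst]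
  · simp only [joinHoriz, List.sum_append, List.sum_cons, Set.mem_singleton_iff, Prod.ext_iff,
      Prod.fst_add, Prod.snd_add]
    omega
  · simp only [List.sum_append, List.sum_singleton, Prod.fst_add, Prod.snd_add]
    omega

include hslope in
theorem exists_joinHoriz_eq {n : ℕ} {q : List (ℕ × ℕ)} (hq : q ∈ pathsTo S {(2 * n, n)})
    (hb : ¬ InBoundary q) : ∃ c w, (c, w) ∈ cutPairs S n ∧ joinHoriz n c w = q := by
  obtain ⟨c, a, w, rfl, hc, ha⟩ := List.exists_eq_append_cons_of_not_forall_prefix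
    (Q := fun q : List (ℕ × ℕ) => q.sum.1 ≤ 2 * q.sum.2) (by simp) hb
  obtain ⟨hS, hsum⟩ := hq
  have ha0 := snd_eq_zero_of_leaves_boundary hslope (hS a (by simp)) (hc c (List.prefix_refl c)) ha
  simp only [List.sum_append, List.sum_singleton, Prod.fst_add, Prod.snd_add] at ha
  simp only [List.sum_append, List.sum_cons, Set.mem_singleton_iff, Prod.ext_iff,
    Prod.fst_add, Prod.snd_add] at hsum
  refine ⟨c, w, Set.mem_biUnion (x := (c.sum.2, w.sum.2)) ?_
    ⟨⟨⟨fun st hst => hS st (by simp [hst]), rfl⟩, hc⟩,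
      fun st hst => hS st (by simp [hst]), rfl, by dsimp only; omega⟩, ?_⟩
  · simp only [mem_coe, HasAntidiagonal.mem_antidiagonal]
    omega
  · simp only [joinHoriz, List.append_cancel_left_eq, List.cons.injEq, and_true]
    ext <;> simp only <;> omega

include hhoriz in
theorem injOn_joinHoriz (n : ℕ) :
    Set.InjOn (Function.uncurry (joinHoriz n)) (cutPairs S n) := by
  rintro ⟨c, w⟩ hcw ⟨c', w'⟩ hcw' h
  obtain ⟨-, -, ⟨-, hc⟩, -⟩ := Set.mem_iUnion₂.1 hcw
  obtain ⟨-, -, ⟨-, hc'⟩, -⟩ := Set.mem_iUnion₂.1 hcw'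
  obtain ⟨rfl, -, rfl⟩ := List.eq_of_append_cons_eq_of_forall_prefix hc
    (joinHoriz_mem_pathsTo hhoriz hcw).2 hc' (joinHoriz_mem_pathsTo hhoriz hcw').2 h
  rfl

include hhoriz hslope in
theorem pathsTo_line_eq_union (n : ℕ) :
    pathsTo S {(2 * n, n)} =
      boundedPathsTo S {(2 * n, n)} ∪ Function.uncurry (joinHoriz n) '' cutPairs S n := by
  ext q
  refine ⟨fun hq => ?_, ?_⟩
  · by_cases hb : InBoundary q
    · exact Or.inl ⟨hq, hb⟩
    obtain ⟨c, w, hcw, rfl⟩ := exists_joinHoriz_eq hslope hq hb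
    exact Or.inr ⟨(c, w), hcw, rfl⟩
  · rintro (hq | ⟨⟨c, w⟩, hcw, rfl⟩)
    exacts [hq.1, (joinHoriz_mem_pathsTo hhoriz hcw).1]

include h00 in
theorem ncard_cutPairs (n : ℕ) :
    (cutPairs S n).ncard = ∑ x ∈ antidiagonal n,
      (boundedPathsTo S {e | e.2 = x.1}).ncard * (pathsTo S (leftRow x.2)).ncard := by
  rw [cutPairs, Set.Finite.ncard_biUnion (antidiagonal n).finite_toSet, finsum_mem_coe_finset]
  · simp only [Set.ncard_prod]
  · exact fun x _ => (finite_boundedPathsTo_row h00 _).prod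
      (finite_pathsTo h00 (finite_leftRow _))
  · intro x hx y hy hxy
    refine Set.disjoint_left.2 fun cw hx' hy' => hxy ?_
    have := hx'.1.1.2.symm.trans hy'.1.1.2
    simp only [mem_coe, HasAntidiagonal.mem_antidiagonal] at hx hy
    ext <;> omega

include h00 hhoriz hslope in
theorem ncard_pathsTo_line (n : ℕ) :
    (pathsTo S {(2 * n, n)}).ncard = (boundedPathsTo S {(2 * n, n)}).ncard +
      ∑ x ∈ antidiagonal n,
        (boundedPathsTo S {e | e.2 = x.1}).ncard * (pathsTo S (leftRow x.2)).ncard := by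
  have hdisj : Disjoint (boundedPathsTo S {(2 * n, n)})
      (Function.uncurry (joinHoriz n) '' cutPairs S n) := by
    refine Set.disjoint_left.2 fun q hq ⟨⟨c, w⟩, hcw, hq'⟩ => ?_
    exact (joinHoriz_mem_pathsTo hhoriz hcw).2 (hq.2 _ (hq' ▸ ⟨w, by simp [joinHoriz]⟩))
  have hfin := finite_pathsTo h00 (S := S) (Set.finite_singleton (2 * n, n))
  rw [pathsTo_line_eq_union hhoriz hslope] at hfin ⊢
  rw [Set.ncard_union_eq hdisj (hfin.subset Set.subset_union_left)
    (hfin.subset Set.subset_union_right), (injOn_joinHoriz hhoriz n).ncard_image,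
    ncard_cutPairs h00]

open Classical in
include h00 hhoriz hslope in
theorem boundedPathsTo_line_eq_union {n : ℕ} (hn : 0 < n) :
    boundedPathsTo S {(2 * n, n)} =
      (fun p => p ++ [(2 * n - p.sum.1, 0)]) '' boundedPathsTo S (leftRow n) ∪
        ⋃ x ∈ (↑{x ∈ antidiagonal n | 1 ≤ x.1 ∧ (2 * x.1, x.1) ∈ S} : Set (ℕ × ℕ)),
          (· ++ [(2 * x.1, x.1)]) '' boundedPathsTo S {(2 * x.2, x.2)} := by
  ext q
  simp only [Set.mem_union, Set.mem_image, Set.mem_iUnion, exists_prop, coe_filter,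
    Set.mem_ofPred_eq, HasAntidiagonal.mem_antidiagonal]
  constructor
  · intro hq
    rcases q.eq_nil_or_concat' with rfl | ⟨p, a, rfl⟩
    · have := hq.1.2
      simp only [List.sum_nil, Set.mem_singleton_iff, Prod.ext_iff, Prod.fst_zero,
        Prod.snd_zero] at this
      omega
    obtain ⟨hpS, haS, hsum, hb, -⟩ := concat_mem_boundedPathsTo.1 hq
    simp only [Set.mem_singleton_iff, Prod.ext_iff, Prod.fst_add, Prod.snd_add] at hsum
    have := hb.sum_fst_le
    by_cases ha : a.2 = 0
    · have : a.1 ≠ 0 := fun h => h00 ((Prod.ext h ha : a = (0, 0)) ▸ haS)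
      refine Or.inl ⟨p, ⟨⟨hpS, by omega, by omega⟩, hb⟩, ?_⟩
      simp only [List.append_cancel_left_eq, List.cons.injEq, and_true]
      ext <;> simp only <;> omega
    · have := hslope a.1 a.2 haS (by omega)
      have ha' : a = (2 * a.2, a.2) := Prod.ext (by dsimp only; omega) rfl
      refine Or.inr ⟨(a.2, n - a.2), ⟨by omega, by omega, ha' ▸ haS⟩, p,
        ⟨⟨hpS, ?_⟩, hb⟩, ha'.symm ▸ rfl⟩
      simp only [Set.mem_singleton_iff, Prod.ext_iff]
      omega
  · rintro (⟨p, ⟨⟨hS, hsum⟩, hb⟩, rfl⟩ | ⟨x, ⟨hx, hx1, hxS⟩, p, ⟨⟨hS, hsum⟩, hb⟩, rfl⟩) <;>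
      refine concat_mem_boundedPathsTo.2 ⟨hS, ?_, ?_, hb, ?_⟩ <;>
      simp only [leftRow, Set.mem_ofPred_eq, Set.mem_singleton_iff, Prod.ext_iff, Prod.fst_add,
        Prod.snd_add] at hsum ⊢
    · exact hhoriz _ (by omega)
    all_goals omega

open Classical in
include h00 hhoriz hslope in
theorem ncard_boundedPathsTo_line {n : ℕ} (hn : 0 < n) :
    (boundedPathsTo S {(2 * n, n)}).ncard = (boundedPathsTo S (leftRow n)).ncard +
      ∑ x ∈ antidiagonal n with 1 ≤ x.1 ∧ (2 * x.1, x.1) ∈ S,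
        (boundedPathsTo S {(2 * x.2, x.2)}).ncard := by
  set T := {x ∈ antidiagonal n | 1 ≤ x.1 ∧ (2 * x.1, x.1) ∈ S}
  have hfin (x : ℕ × ℕ) : (boundedPathsTo S {(2 * x.2, x.2)}).Finite :=
    finite_boundedPathsTo h00 (Set.finite_singleton _)
  have hlast {p p' : List (ℕ × ℕ)} {a a' : ℕ × ℕ} (h : p ++ [a] = p' ++ [a']) : a = a' := by
    simpa using (List.append_inj' h rfl).2
  rw [boundedPathsTo_line_eq_union h00 hhoriz hslope hn, Set.ncard_union_eq _
    ((finite_boundedPathsTo h00 (finite_leftRow n)).image _)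
    (T.finite_toSet.biUnion fun x _ => (hfin x).image _), Set.InjOn.ncard_image,
    Set.Finite.ncard_biUnion T.finite_toSet, finsum_mem_coe_finset]
  · exact congrArg _ (sum_congr rfl fun x _ =>
      (List.append_left_injective _).injOn.ncard_image)
  · exact fun x _ => (hfin x).image _
  · intro x hx y hy hxy
    refine Set.disjoint_left.2 ?_
    rintro _ ⟨p, -, rfl⟩ ⟨p', -, h⟩
    have := hlast h
    simp only [T, mem_coe, mem_filter, HasAntidiagonal.mem_antidiagonal, Prod.ext_iff]
      at hx hy this
    exact hxy (Prod.ext this.2.symm (by omega))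
  · intro p _ p' _ h
    simpa using congrArg List.dropLast h
  · refine Set.disjoint_left.2 ?_
    rintro _ ⟨p, -, rfl⟩ hq
    obtain ⟨x, hx, p', -, h⟩ := Set.mem_iUnion₂.1 hq
    have := hlast h
    simp only [T, mem_coe, mem_filter, Prod.ext_iff] at hx this
    omega

include h00 in
theorem countSeries_boundedPathsTo_row :
    countSeries (fun n => boundedPathsTo S {e | e.2 = n}) =
      countSeries (fun n => boundedPathsTo S {(2 * n, n)}) +
        countSeries (fun n => boundedPathsTo S (leftRow n)) := by
  ext n
  simp only [map_add, coeff_countSeries, ncard_boundedPathsTo_row h00, Nat.cast_add]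

open Classical in
include h00 hhoriz hslope in
theorem countSeries_boundedPathsTo_line :
    countSeries (fun n => boundedPathsTo S {(2 * n, n)}) =
      1 + countSeries (fun n => boundedPathsTo S (leftRow n)) +
        (PowerSeries.mk fun a => if 1 ≤ a ∧ (2 * a, a) ∈ S then 1 else 0) *
          countSeries (fun n => boundedPathsTo S {(2 * n, n)}) := by
  ext n
  rw [map_add, map_add, PowerSeries.coeff_mul, PowerSeries.coeff_one]
  simp only [coeff_countSeries, PowerSeries.coeff_mk, ite_mul, one_mul, zero_mul, ← sum_filter]
  rcases Nat.eq_zero_or_pos n with rfl | hn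
  · simp only [Nat.mul_zero, boundedPathsTo_origin h00]
    simp [leftRow, boundedPathsTo, pathsTo, filter_singleton]
  · rw [ncard_boundedPathsTo_line h00 hhoriz hslope hn, if_neg hn.ne']
    push_cast
    ring

include h00 hhoriz hslope in
theorem countSeries_pathsTo_line :
    countSeries (fun n => pathsTo S {(2 * n, n)}) =
      countSeries (fun n => boundedPathsTo S {(2 * n, n)}) +
        countSeries (fun n => boundedPathsTo S {e | e.2 = n}) *
          countSeries (fun n => pathsTo S (leftRow n)) := by
  ext n
  simp only [map_add, PowerSeries.coeff_mul, coeff_countSeries,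
    ncard_pathsTo_line h00 hhoriz hslope n]
  push_cast
  rfl

end SlopeCondition

end StepPath

open StepPath

open Classical in
theorem stmt19 (S : Set (ℕ × ℕ)) (h00 : (0, 0) ∉ S)
    (hhoriz : ∀ a : ℕ, 1 ≤ a → (a, 0) ∈ S)
    (hslope : ∀ a b : ℕ, (a, b) ∈ S → 0 < b → a ≤ 2 * b)
    (P T E F : PowerSeries ℚ)
    (hP : P = PowerSeries.mk fun n =>
      (Set.ncard {p : List (ℕ × ℕ) | IsPath S (2 * n) n p ∧
        HasBoundary (fun i => 2 * i + 1) p} : ℚ))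
    (hT : T = PowerSeries.mk fun a => if 1 ≤ a ∧ (2 * a, a) ∈ S then 1 else 0)
    (hE : E = PowerSeries.mk fun n =>
      ∑ j ∈ Finset.range (2 * n + 1), (aCount S j n : ℚ))
    (hF : F = PowerSeries.mk fun n =>
      ∑ j ∈ Finset.range (2 * n), (aCount S j n : ℚ)) :
    P * (1 + (2 - T) * F) = E := by
  have hP' : P = countSeries fun n => boundedPathsTo S {(2 * n, n)} := by
    simp only [hP, countSeries, isPath_iff_mem_pathsTo, hasBoundary_iff_inBoundary]
    rfl
  have hF' : F = countSeries fun n => pathsTo S (leftRow n) := by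
    ext n
    simp [hF, coeff_countSeries, ncard_pathsTo_leftRow h00]
  have hE' : E = F + countSeries fun n => pathsTo S {(2 * n, n)} := by
    ext n
    simp only [hE, hF, map_add, PowerSeries.coeff_mk, coeff_countSeries, Finset.sum_range_succ,
      aCount, isPath_iff_mem_pathsTo, Set.ofPred_mem_eq]
  have hline := countSeries_boundedPathsTo_line h00 hhoriz hslope
  rw [← hP', ← hT] at hline
  rw [hE', countSeries_pathsTo_line h00 hhoriz hslope, countSeries_boundedPathsTo_row h00, ← hP',
    ← hF']
  linear_combination F * hline
end
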